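/- (Proposition 2) Let Ω¹(A) be the kernel of the multiplication map m: A ⊗_K A → A, with the derivation d: A → Ω¹(A), da = 1⊗a − a⊗1, and let d_Z = p_Z ∘ d: A → Ω¹(A)_Z be its composite with the canonical projection p_Z: Ω¹(A) → Ω¹(A)_Z. Then for every derivation δ: A → M of A with values in a central bimodule M there exists a unique bimodule homomorphism i_δ: Ω¹(A)_Z → M such that δ = i_δ ∘ d_Z. -/

import Mathlib

set_option maxHeartbeats 1000000
set_option synthInstance.maxHeartbeats 400000

open TensorProduct MulOpposite

section RightTensor
variable (R : Type*) [CommRing R] (S : Type*) [Ring S]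
variable (M N : Type*) [AddCommGroup M] [AddCommGroup N] [Module R M] [Module R N]
variable [Module S N] [SMulCommClass S R N]

noncomputable def rightFactorEnd : S →+* Module.End R (M ⊗[R] N) where
  toFun s := (Module.toModuleEnd R N s).lTensor M
  map_one' := by
    show (Module.toModuleEnd R N (1 : S)).lTensor M = 1
    rw [map_one]; exact LinearMap.lTensor_id M N
  map_mul' s t := by
    show (Module.toModuleEnd R N (s * t)).lTensor M = _
    rw [map_mul]; exact LinearMap.lTensor_mul M _ _
  map_zero' := by
    show (Module.toModuleEnd R N (0 : S)).lTensor M = 0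
    rw [map_zero]; exact LinearMap.lTensor_zero M
  map_add' s t := by
    show (Module.toModuleEnd R N (s + t)).lTensor M = _
    rw [map_add]; exact LinearMap.lTensor_add M _ _

noncomputable def rightFactorModule : Module S (M ⊗[R] N) :=
  Module.compHom _ (rightFactorEnd R S M N)

end RightTensor

section Bimodule

variable (K A : Type*) [CommRing K] [Ring A] [Algebra K A]

noncomputable def leftAct (M : Type*) [AddCommGroup M] [Module (A ⊗[K] Aᵐᵒᵖ) M] :
    Module A M :=
  Module.compHom M (Algebra.TensorProduct.includeLeftRingHom : A →+* A ⊗[K] Aᵐᵒᵖ)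

noncomputable def rightAct (M : Type*) [AddCommGroup M] [Module (A ⊗[K] Aᵐᵒᵖ) M] :
    Module Aᵐᵒᵖ M :=
  Module.compHom M ((Algebra.TensorProduct.includeRight : Aᵐᵒᵖ →ₐ[K] A ⊗[K] Aᵐᵒᵖ) : Aᵐᵒᵖ →+* A ⊗[K] Aᵐᵒᵖ)

variable (M N : Type*)
  [AddCommGroup M] [Module (A ⊗[K] Aᵐᵒᵖ) M] [Module K M] [IsScalarTower K (A ⊗[K] Aᵐᵒᵖ) M]
  [AddCommGroup N] [Module (A ⊗[K] Aᵐᵒᵖ) N] [Module K N] [IsScalarTower K (A ⊗[K] Aᵐᵒᵖ) N]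

/-- The bimodule structure on `M ⊗[K] N` given by `a • (m ⊗ n) • b = (a • m) ⊗ (n • b)`. -/
noncomputable def tensorBimoduleK : Module (A ⊗[K] Aᵐᵒᵖ) (M ⊗[K] N) :=
  letI mA : Module A M := leftAct K A M
  letI nOp : Module Aᵐᵒᵖ N := rightAct K A N
  haveI h1 : SMulCommClass K A M :=
    ⟨fun k a m => smul_comm k (a ⊗ₜ[K] (1 : Aᵐᵒᵖ)) m⟩
  haveI h2 : SMulCommClass Aᵐᵒᵖ K N :=
    ⟨fun b k n => (smul_comm k ((1 : A) ⊗ₜ[K] b) n).symm⟩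
  letI mod_left : Module A (M ⊗[K] N) := TensorProduct.leftModule
  letI mod_right : Module Aᵐᵒᵖ (M ⊗[K] N) := rightFactorModule K Aᵐᵒᵖ M N
  haveI tower_left : IsScalarTower K A (M ⊗[K] N) := ⟨fun k a x => by
    induction x using TensorProduct.induction_on with
    | zero => simp
    | tmul m n =>
        show ((k • a) • m) ⊗ₜ[K] n = k • ((a • m) ⊗ₜ[K] n)
        have h : ((k • a) • m : M) = k • (a • m) := by
          show ((k • a) ⊗ₜ[K] (1 : Aᵐᵒᵖ)) • m = k • ((a ⊗ₜ[K] (1 : Aᵐᵒᵖ)) • m)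
          rw [← smul_assoc, smul_tmul']
        rw [h]
        exact (smul_tmul' k (a • m) n).symm
    | add x y hx hy => simp only [smul_add, hx, hy]⟩
  haveI tower_right : IsScalarTower K Aᵐᵒᵖ (M ⊗[K] N) := ⟨fun k b x => by
    induction x using TensorProduct.induction_on with
    | zero => simp
    | tmul m n =>
        show m ⊗ₜ[K] ((k • b) • n) = k • (m ⊗ₜ[K] (b • n))
        have h : ((k • b) • n : N) = k • (b • n) := by
          show ((1 : A) ⊗ₜ[K] (k • b)) • n = k • (((1 : A) ⊗ₜ[K] b) • n)
          rw [show ((1 : A) ⊗ₜ[K] (k • b) : A ⊗[K] Aᵐᵒᵖ) = k • ((1 : A) ⊗ₜ[K] b) from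
                tmul_smul k (1 : A) b,
              smul_assoc]
        rw [h]
        exact tmul_smul (R := K) k m (b • n)
    | add x y hx hy => simp only [smul_add, hx, hy]⟩
  haveI comm : SMulCommClass A Aᵐᵒᵖ (M ⊗[K] N) := ⟨fun a b x => by
    induction x using TensorProduct.induction_on with
    | zero => simp
    | tmul m n =>
        show a • (m ⊗ₜ[K] (b • n)) = b • ((a • m) ⊗ₜ[K] n)
        rw [smul_tmul']
        rfl
    | add x y hx hy => simp only [smul_add, hx, hy]⟩
  TensorProduct.Algebra.module

end Bimodule

section Omega
variable (K A : Type*) [CommRing K] [Ring A] [Algebra K A]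

/-- `A` as a bimodule over itself. -/
noncomputable def bimoduleBA : Module (A ⊗[K] Aᵐᵒᵖ) A := TensorProduct.Algebra.module

attribute [local instance] bimoduleBA

theorem towerBA : IsScalarTower K (A ⊗[K] Aᵐᵒᵖ) A := ⟨fun k b a => by
  show TensorProduct.Algebra.moduleAux (k • b) a = k • TensorProduct.Algebra.moduleAux b a
  rw [map_smul]
  rfl⟩

/-- `A ⊗[K] A` as a bimodule, with `a • (x ⊗ y) • b = (a*x) ⊗ (y*b)`. -/
noncomputable def bimoduleAA : Module (A ⊗[K] Aᵐᵒᵖ) (A ⊗[K] A) :=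
  haveI := towerBA K A
  tensorBimoduleK K A A A

attribute [local instance] bimoduleAA

/-- The multiplication `A ⊗[K] A → A` as a bimodule homomorphism. -/
noncomputable def mulBimodHom : (A ⊗[K] A) →ₗ[A ⊗[K] Aᵐᵒᵖ] A where
  toFun := LinearMap.mul' K A
  map_add' := map_add _
  map_smul' b x := by
    show LinearMap.mul' K A (b • x) = b • LinearMap.mul' K A x
    induction b using TensorProduct.induction_on with
    | zero => exact (congrArg (LinearMap.mul' K A) (zero_smul (A ⊗[K] Aᵐᵒᵖ) x)).trans ((map_zero _).trans (zero_smul (A ⊗[K] Aᵐᵒᵖ) (LinearMap.mul' K A x)).symm)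
    | tmul a0 b0 =>
        induction x using TensorProduct.induction_on with
        | zero => simp
        | tmul x1 y1 =>
            show LinearMap.mul' K A ((a0 ⊗ₜ[K] b0 : A ⊗[K] Aᵐᵒᵖ) • (x1 ⊗ₜ[K] y1))
              = (a0 ⊗ₜ[K] b0 : A ⊗[K] Aᵐᵒᵖ) • (LinearMap.mul' K A (x1 ⊗ₜ[K] y1))
            have h1 : ((a0 ⊗ₜ[K] b0 : A ⊗[K] Aᵐᵒᵖ) • (x1 ⊗ₜ[K] y1) : A ⊗[K] A)
                = (a0 * (x1 * 1)) ⊗ₜ[K] (1 * (y1 * unop b0)) := rfl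
            have h2 : ((a0 ⊗ₜ[K] b0 : A ⊗[K] Aᵐᵒᵖ) • (x1 * y1) : A)
                = a0 * (x1 * y1 * unop b0) := rfl
            rw [LinearMap.mul'_apply, h1, h2, LinearMap.mul'_apply]
            noncomm_ring
        | add x y hx hy =>
            rw [smul_add, map_add, map_add, hx, hy, smul_add]
    | add b c hb hc =>
        rw [add_smul, map_add, hb, hc, add_smul]

/-- `Ω¹(A)`: the kernel of the multiplication, as a sub-bimodule of `A ⊗[K] A`. -/
noncomputable def Omega1 : Submodule (A ⊗[K] Aᵐᵒᵖ) (A ⊗[K] A) :=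
  LinearMap.ker (mulBimodHom K A)

/-- `Ω¹(A)` as a type, with its bimodule structure. -/
def OmegaTy : Type _ := ↥(Omega1 K A)

noncomputable instance : AddCommGroup (OmegaTy K A) :=
  inferInstanceAs (AddCommGroup ↥(Omega1 K A))

noncomputable instance : Module (A ⊗[K] Aᵐᵒᵖ) (OmegaTy K A) :=
  inferInstanceAs (Module (A ⊗[K] Aᵐᵒᵖ) ↥(Omega1 K A))

/-- The universal derivation `d : A → Ω¹(A)`, `d a = 1 ⊗ a - a ⊗ 1`. -/
noncomputable def dOmega (a : A) : OmegaTy K A :=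
  (⟨(1 : A) ⊗ₜ[K] a - a ⊗ₜ[K] (1 : A), by
    simp [Omega1, LinearMap.mem_ker, mulBimodHom]⟩ : ↥(Omega1 K A))

end Omega


section Statement
variable (K A : Type*) [CommRing K] [Ring A] [Algebra K A]

attribute [local instance] bimoduleBA bimoduleAA

/-- A bimodule (i.e. a module over `A ⊗[K] Aᵐᵒᵖ`) is *central* if every element of the
center of `A` acts the same way on the left and on the right. -/
def IsCentralBimodule (M : Type*) [AddCommGroup M] [Module (A ⊗[K] Aᵐᵒᵖ) M] : Prop :=
  ∀ z ∈ Set.center A, ∀ m : M, (z ⊗ₜ[K] (1 : Aᵐᵒᵖ)) • m = ((1 : A) ⊗ₜ[K] (op z)) • m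

/-- `[Z(A), M]`: the sub-bimodule of `M` generated by the elements `z•m - m•z`. -/
def centerCommutator (M : Type*) [AddCommGroup M] [Module (A ⊗[K] Aᵐᵒᵖ) M] :
    Submodule (A ⊗[K] Aᵐᵒᵖ) M :=
  Submodule.span _ {x : M | ∃ z ∈ Set.center A, ∃ m : M,
    x = (z ⊗ₜ[K] (1 : Aᵐᵒᵖ)) • m - ((1 : A) ⊗ₜ[K] (op z)) • m}

/-! A derivation `δ : A → M` extends to the `K`-linear map `x ⊗ y ↦ x • δ y` on `A ⊗ A`. By the
Leibniz rule it fails to be a bimodule map only by a term that is a multiple of `m(x)`, so its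
restriction to `Ω¹(A) = ker m` is a bimodule map; it sends `d a` to `δ a`, and it kills
`[Z(A), Ω¹(A)]` because `M` is central. Uniqueness holds because `d(A)` generates `Ω¹(A)`:
if `∑ xᵢ yᵢ = 0` then `∑ xᵢ ⊗ yᵢ = ∑ xᵢ • d yᵢ`. -/

theorem bimoduleAA_tmul_smul_tmul (a : A) (b : Aᵐᵒᵖ) (x y : A) :
    ((a ⊗ₜ[K] b : A ⊗[K] Aᵐᵒᵖ) • (x ⊗ₜ[K] y) : A ⊗[K] A) = (a * x) ⊗ₜ[K] (y * unop b) := by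
  show (a * (x * 1)) ⊗ₜ[K] (1 * (y * unop b)) = _
  rw [mul_one, one_mul]

theorem dOmega_val (a : A) : (dOmega K A a).1 = (1 : A) ⊗ₜ[K] a - a ⊗ₜ[K] (1 : A) := rfl

theorem tmul_one_smul_dOmega_val (x y : A) :
    ((x ⊗ₜ[K] (1 : Aᵐᵒᵖ) : A ⊗[K] Aᵐᵒᵖ) • dOmega K A y).1
      = x ⊗ₜ[K] y - (x * y) ⊗ₜ[K] (1 : A) := by
  show (x ⊗ₜ[K] (1 : Aᵐᵒᵖ) : A ⊗[K] Aᵐᵒᵖ) • (dOmega K A y).1 = _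
  rw [dOmega_val, smul_sub, bimoduleAA_tmul_smul_tmul, bimoduleAA_tmul_smul_tmul]
  simp

theorem sub_mul'_tmul_one_mem_span_dOmega (x : A ⊗[K] A) :
    x - LinearMap.mul' K A x ⊗ₜ[K] (1 : A) ∈
      (Submodule.span (A ⊗[K] Aᵐᵒᵖ) (Set.range (dOmega K A))).map (Omega1 K A).subtype := by
  induction x using TensorProduct.induction_on with
  | zero => simp
  | tmul x y =>
      rw [LinearMap.mul'_apply, ← tmul_one_smul_dOmega_val]
      exact Submodule.mem_map_of_mem
        (Submodule.smul_mem _ (x ⊗ₜ[K] (1 : Aᵐᵒᵖ)) (Submodule.subset_span (Set.mem_range_self y)))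
  | add x y hx hy =>
      rw [map_add, add_tmul, add_sub_add_comm]
      exact Submodule.add_mem _ hx hy

theorem span_range_dOmega :
    Submodule.span (A ⊗[K] Aᵐᵒᵖ) (Set.range (dOmega K A)) = ⊤ := by
  refine eq_top_iff.mpr fun ω _ => ?_
  have hω : LinearMap.mul' K A ω.1 = 0 := ω.2
  obtain ⟨ω', hω', hval⟩ := sub_mul'_tmul_one_mem_span_dOmega K A ω.1
  rw [hω, zero_tmul, sub_zero] at hval
  exact Subtype.ext hval ▸ hω'

theorem OmegaTy.hom_ext {N : Type*} [AddCommGroup N] [Module (A ⊗[K] Aᵐᵒᵖ) N]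
    {f g : OmegaTy K A →ₗ[A ⊗[K] Aᵐᵒᵖ] N} (h : ∀ a, f (dOmega K A a) = g (dOmega K A a)) :
    f = g :=
  LinearMap.ext_on_range (span_range_dOmega K A) h

theorem centerCommutator_le_ker {M N : Type*} [AddCommGroup M] [Module (A ⊗[K] Aᵐᵒᵖ) M]
    [AddCommGroup N] [Module (A ⊗[K] Aᵐᵒᵖ) N] (hM : IsCentralBimodule K A M)
    (f : N →ₗ[A ⊗[K] Aᵐᵒᵖ] M) : centerCommutator K A N ≤ LinearMap.ker f := by
  rw [centerCommutator, Submodule.span_le]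
  rintro _ ⟨z, hz, n, rfl⟩
  rw [SetLike.mem_coe, LinearMap.mem_ker, map_sub, map_smul, map_smul, hM z hz, sub_self]

section Derivation

variable (M : Type*) [AddCommGroup M] [Module (A ⊗[K] Aᵐᵒᵖ) M]

-- The `0` produced by `TensorProduct.induction_on` is not syntactically the ring zero that
-- `zero_smul` expects.
theorem bimodule_zero_smul (m : M) : (0 : A ⊗[K] Aᵐᵒᵖ) • m = 0 := zero_smul (A ⊗[K] Aᵐᵒᵖ) m

variable [Module K M]

def IsBimoduleDerivation (δ : A →ₗ[K] M) : Prop :=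
  ∀ a b : A, δ (a * b) = (a ⊗ₜ[K] (1 : Aᵐᵒᵖ)) • δ b + ((1 : A) ⊗ₜ[K] (op b)) • δ a

variable {K A M}

theorem IsBimoduleDerivation.map_one {δ : A →ₗ[K] M} (hδ : IsBimoduleDerivation K A M δ) :
    δ 1 = 0 := by
  have h := hδ 1 1
  rwa [mul_one, op_one, ← Algebra.TensorProduct.one_def, one_smul, left_eq_add] at h

variable [IsScalarTower K (A ⊗[K] Aᵐᵒᵖ) M]

noncomputable def derivationTensorLift (δ : A →ₗ[K] M) : A ⊗[K] A →ₗ[K] M :=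
  TensorProduct.lift (LinearMap.mk₂ K (fun x y => (x ⊗ₜ[K] (1 : Aᵐᵒᵖ)) • δ y)
    (fun x x' y => by rw [add_tmul, add_smul])
    (fun k x y => by rw [← smul_tmul', smul_assoc])
    (fun x y y' => by rw [map_add, smul_add])
    (fun k x y => by rw [map_smul, smul_comm]))

theorem derivationTensorLift_tmul (δ : A →ₗ[K] M) (x y : A) :
    derivationTensorLift δ (x ⊗ₜ[K] y) = (x ⊗ₜ[K] (1 : Aᵐᵒᵖ)) • δ y := rfl

theorem derivationTensorLift_tmul_smul {δ : A →ₗ[K] M} (hδ : IsBimoduleDerivation K A M δ)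
    (a : A) (b : Aᵐᵒᵖ) (x : A ⊗[K] A) :
    derivationTensorLift δ ((a ⊗ₜ[K] b : A ⊗[K] Aᵐᵒᵖ) • x)
      = (a ⊗ₜ[K] b : A ⊗[K] Aᵐᵒᵖ) • derivationTensorLift δ x
        + ((a * LinearMap.mul' K A x) ⊗ₜ[K] (1 : Aᵐᵒᵖ)) • δ (unop b) := by
  induction x using TensorProduct.induction_on with
  | zero =>
      rw [smul_zero, map_zero, map_zero, mul_zero, zero_tmul, smul_zero, bimodule_zero_smul,
        add_zero]
  | tmul x y =>
      rw [bimoduleAA_tmul_smul_tmul, derivationTensorLift_tmul, derivationTensorLift_tmul,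
        LinearMap.mul'_apply, hδ, smul_add, ← mul_smul, ← mul_smul, ← mul_smul,
        Algebra.TensorProduct.tmul_mul_tmul, Algebra.TensorProduct.tmul_mul_tmul,
        Algebra.TensorProduct.tmul_mul_tmul, op_unop]
      simp only [mul_one, one_mul, mul_assoc]
      exact add_comm _ _
  | add x y hx hy =>
      rw [smul_add, map_add, map_add, hx, hy, map_add, mul_add, add_tmul, add_smul, smul_add]
      abel

theorem derivationTensorLift_smul_of_mul'_eq_zero {δ : A →ₗ[K] M}
    (hδ : IsBimoduleDerivation K A M δ) (c : A ⊗[K] Aᵐᵒᵖ) {x : A ⊗[K] A}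
    (hx : LinearMap.mul' K A x = 0) :
    derivationTensorLift δ (c • x) = c • derivationTensorLift δ x := by
  induction c using TensorProduct.induction_on with
  | zero => rw [bimodule_zero_smul, map_zero, bimodule_zero_smul]
  | tmul a b =>
      rw [derivationTensorLift_tmul_smul hδ, hx, mul_zero, zero_tmul, bimodule_zero_smul, add_zero]
  | add c c' hc hc' => rw [add_smul, map_add, hc, hc', add_smul]

noncomputable def derivationOmegaLift {δ : A →ₗ[K] M} (hδ : IsBimoduleDerivation K A M δ) :
    OmegaTy K A →ₗ[A ⊗[K] Aᵐᵒᵖ] M where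
  toFun ω := derivationTensorLift δ ω.1
  map_add' _ _ := map_add _ _ _
  map_smul' c ω := derivationTensorLift_smul_of_mul'_eq_zero hδ c ω.2

theorem derivationOmegaLift_dOmega {δ : A →ₗ[K] M} (hδ : IsBimoduleDerivation K A M δ)
    (a : A) : derivationOmegaLift hδ (dOmega K A a) = δ a := by
  show derivationTensorLift δ (dOmega K A a).1 = δ a
  rw [dOmega_val, map_sub, derivationTensorLift_tmul, derivationTensorLift_tmul, hδ.map_one,
    smul_zero, sub_zero, ← Algebra.TensorProduct.one_def, one_smul]

end Derivation

theorem omega1Z_universal_for_central_bimodules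
    (M : Type*) [AddCommGroup M] [Module (A ⊗[K] Aᵐᵒᵖ) M]
    [Module K M] [IsScalarTower K (A ⊗[K] Aᵐᵒᵖ) M]
    (hMc : IsCentralBimodule K A M)
    (δ : A →ₗ[K] M)
    (hδ : ∀ a b : A, δ (a * b)
      = (a ⊗ₜ[K] (1 : Aᵐᵒᵖ)) • δ b + ((1 : A) ⊗ₜ[K] (op b)) • δ a) :
    ∃! φ : ((OmegaTy K A) ⧸ centerCommutator K A (OmegaTy K A)) →ₗ[A ⊗[K] Aᵐᵒᵖ] M,
      ∀ a : A, δ a = φ ((centerCommutator K A (OmegaTy K A)).mkQ (dOmega K A a)) := by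
  have hδ : IsBimoduleDerivation K A M δ := hδ
  refine ⟨(centerCommutator K A _).liftQ (derivationOmegaLift hδ)
      (centerCommutator_le_ker K A hMc _),
    fun a => (derivationOmegaLift_dOmega hδ a).symm, fun ψ hψ => ?_⟩
  refine Submodule.linearMap_qext _ (OmegaTy.hom_ext K A fun a => ?_)
  rw [LinearMap.comp_apply, LinearMap.comp_apply, ← hψ]
  exact (derivationOmegaLift_dOmega hδ a).symm

end Statement
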